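/- arXiv:2302.05742 — 4 statements merged into one kernel-verified Lean document; each statement's English description precedes it below -/
import Mathlib

section
/- The Hamiltonian H(x,m,t,p,q) = min_{b∈B̃} max_{a∈A} { −f(x,a)·p + ⟨q, div(bm)⟩_{L^2} − ℓ(x,m,t,a,b) } satisfies, for q = 2(m₁−m₂)/ξ², the key comparison estimate |H(x₁,m₁,t₁,p,q) − H(x₂,m₂,t₂,p,q)| ≤ L‖x₁−x₂‖·‖p‖ + M·‖m₁−m₂‖²_{L²(Ω₁(T))}/ξ² + ω_ℓ(‖x₁−x₂‖ + ‖m₁−m₂‖_{H¹(Ω₁(T))} + |t₁−t₂|). -/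
/-!
Fix the field `b` and the control `a` of the min-max. The transport term is linear in `m`, so its
increment is `⟨q, div(b (m₁ - m₂))⟩`; for `q = 2(m₁ - m₂)/ξ²` the identity
`2u div(bu) = div(u² b) + u² div b` and the vanishing of `∫ div(u² b)` for compactly supported
`u` turn it into `ξ⁻² ∫ (m₁ - m₂)² div b`, which is at most `M‖m₁ - m₂‖²/ξ²`. The drift and cost
terms are controlled by the Lipschitz bound on `f` and the modulus `ωℓ`. A pointwise bound on the
increments of the integrands passes to the `⨆` over `a` and the `⨅` over `b`.
-/

open Set MeasureTheory

noncomputable section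

/-- the divergence `div(b·m)(y) = trace (D_y (m(y) b(y)))`. -/
def divbm (d : ℕ) (b : EuclideanSpace ℝ (Fin d) → EuclideanSpace ℝ (Fin d))
    (m : EuclideanSpace ℝ (Fin d) → ℝ) (y : EuclideanSpace ℝ (Fin d)) : ℝ :=
  LinearMap.trace ℝ (EuclideanSpace ℝ (Fin d))
    (fderiv ℝ (fun z => m z • b z) y).toLinearMap

/-- the `H¹` expression `‖m₁ − m₂‖_{H¹}` used in the modulus of continuity. -/
def H1dist (d : ℕ) (m₁ m₂ : EuclideanSpace ℝ (Fin d) → ℝ) : ℝ :=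
  Real.sqrt (∫ y, ((m₁ y - m₂ y) ^ 2 +
    ‖fderiv ℝ (fun z => m₁ z - m₂ z) y‖ ^ 2))

/-- the admissible fields `b ∈ B̃`: `C¹`, `‖b‖_∞ ≤ M` and `‖div b‖_∞ ≤ M`. -/
def Bset (d : ℕ) (M : ℝ) : Set (EuclideanSpace ℝ (Fin d) → EuclideanSpace ℝ (Fin d)) :=
  {b | ContDiff ℝ 1 b ∧ (∀ y, ‖b y‖ ≤ M) ∧
    ∀ y, |LinearMap.trace ℝ (EuclideanSpace ℝ (Fin d))
      (fderiv ℝ b y).toLinearMap| ≤ M}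

/-- the Hamiltonian
`H(x,m,t,p,q) = min_{b∈B̃} max_{a∈A} { −f(x,a)·p + ⟨q, div(bm)⟩_{L²} − ℓ(x,m,t,a,b) }`. -/
def Ham (d k : ℕ) (M : ℝ) (A : Set (EuclideanSpace ℝ (Fin k)))
    (f : EuclideanSpace ℝ (Fin d) → EuclideanSpace ℝ (Fin k) → EuclideanSpace ℝ (Fin d))
    (ℓ : EuclideanSpace ℝ (Fin d) → (EuclideanSpace ℝ (Fin d) → ℝ) → ℝ →
      EuclideanSpace ℝ (Fin k) →
      (EuclideanSpace ℝ (Fin d) → EuclideanSpace ℝ (Fin d)) → ℝ)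
    (x : EuclideanSpace ℝ (Fin d)) (m : EuclideanSpace ℝ (Fin d) → ℝ) (t : ℝ)
    (p : EuclideanSpace ℝ (Fin d)) (q : EuclideanSpace ℝ (Fin d) → ℝ) : ℝ :=
  ⨅ b : ↥(Bset d M), ⨆ a : ↥A,
    (-(inner ℝ (f x a.1) p : ℝ) + (∫ y, q y * divbm d b.1 m y) - ℓ x m t a.1 b.1)

namespace Real

variable {ι : Sort*} {f g : ι → ℝ} {C : ℝ}

lemma iSup_eq_neg_iInf_neg (f : ι → ℝ) : ⨆ i, f i = -⨅ i, -f i := by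
  rw [iInf, ← Set.neg_range, Real.sInf_neg, neg_neg, iSup]

lemma bddBelow_range_of_le_add (hf : BddBelow (range f)) (h : ∀ i, f i ≤ g i + C) :
    BddBelow (range g) := by
  obtain ⟨c, hc⟩ := hf
  exact ⟨c - C, forall_mem_range.2 fun i => by linarith [hc (mem_range_self i), h i]⟩

lemma iInf_le_iInf_add [Nonempty ι] (hf : BddBelow (range f)) (h : ∀ i, f i ≤ g i + C) :
    ⨅ i, f i ≤ (⨅ i, g i) + C :=
  sub_le_iff_le_add.mp <| le_ciInf fun i => by linarith [ciInf_le hf i, h i]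

/-- An unbounded family has junk infimum `0`; then `0 ≤ C` comes from the nonempty index set. -/
lemma abs_iInf_sub_iInf_le [Nonempty ι] (h : ∀ i, |f i - g i| ≤ C) :
    |(⨅ i, f i) - ⨅ i, g i| ≤ C := by
  have hfg : ∀ i, f i ≤ g i + C := fun i => by linarith [(abs_sub_le_iff.mp (h i)).1]
  have hgf : ∀ i, g i ≤ f i + C := fun i => by linarith [(abs_sub_le_iff.mp (h i)).2]
  by_cases hf : BddBelow (range f)
  · have hg := bddBelow_range_of_le_add hf hfg
    rw [abs_sub_le_iff]
    constructor <;> linarith [iInf_le_iInf_add hf hfg, iInf_le_iInf_add hg hgf]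
  · have hg : ¬BddBelow (range g) := mt (bddBelow_range_of_le_add · hgf) hf
    rw [iInf_of_not_bddBelow hf, iInf_of_not_bddBelow hg, sub_zero, abs_zero]
    exact (abs_nonneg _).trans (h (Classical.arbitrary ι))

lemma abs_iSup_sub_iSup_le [Nonempty ι] (h : ∀ i, |f i - g i| ≤ C) :
    |(⨆ i, f i) - ⨆ i, g i| ≤ C := by
  rw [iSup_eq_neg_iInf_neg f, iSup_eq_neg_iInf_neg g, neg_sub_neg, abs_sub_comm]
  exact abs_iInf_sub_iInf_le fun i => by rw [neg_sub_neg, abs_sub_comm]; exact h i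

end Real

section Divergence

variable {E : Type*} [NormedAddCommGroup E] [NormedSpace ℝ E]

lemma integrable_fderiv [MeasurableSpace E] [OpensMeasurableSpace E] (μ : Measure E)
    [IsFiniteMeasureOnCompacts μ] {F : Type*} [NormedAddCommGroup F] [NormedSpace ℝ F]
    {v : E → F} (hv : ContDiff ℝ 1 v) (hc : HasCompactSupport v) :
    Integrable (fun y => fderiv ℝ v y) μ :=
  (hv.continuous_fderiv one_ne_zero).integrable_of_hasCompactSupport (hc.fderiv (𝕜 := ℝ))

variable [FiniteDimensional ℝ E]

lemma continuous_trace_fderiv {v : E → E} (hv : ContDiff ℝ 1 v) :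
    Continuous fun y => LinearMap.trace ℝ E (fderiv ℝ v y) :=
  (LinearMap.continuous_of_finiteDimensional
    ((LinearMap.trace ℝ E).comp (ContinuousLinearMap.coeLM ℝ))).comp
    (hv.continuous_fderiv one_ne_zero)

lemma trace_fderiv_smul {m : E → ℝ} {b : E → E} {y : E} (hm : DifferentiableAt ℝ m y)
    (hb : DifferentiableAt ℝ b y) :
    LinearMap.trace ℝ E (fderiv ℝ (fun z => m z • b z) y)
      = fderiv ℝ m y (b y) + m y * LinearMap.trace ℝ E (fderiv ℝ b y) := by
  rw [fderiv_fun_smul hm hb]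
  simp [add_comm]

lemma trace_fderiv_smul_sub {m₁ m₂ : E → ℝ} {b : E → E} {y : E}
    (hm₁ : DifferentiableAt ℝ m₁ y) (hm₂ : DifferentiableAt ℝ m₂ y)
    (hb : DifferentiableAt ℝ b y) :
    LinearMap.trace ℝ E (fderiv ℝ (fun z => m₁ z • b z) y)
        - LinearMap.trace ℝ E (fderiv ℝ (fun z => m₂ z • b z) y)
      = LinearMap.trace ℝ E (fderiv ℝ (fun z => (m₁ z - m₂ z) • b z) y) := by
  rw [trace_fderiv_smul hm₁ hb, trace_fderiv_smul hm₂ hb, trace_fderiv_smul (hm₁.fun_sub hm₂) hb,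
    fderiv_fun_sub hm₁ hm₂]
  simp only [sub_apply]
  ring

lemma trace_fderiv_sq_smul {u : E → ℝ} {b : E → E} {y : E} (hu : DifferentiableAt ℝ u y)
    (hb : DifferentiableAt ℝ b y) :
    LinearMap.trace ℝ E (fderiv ℝ (fun z => u z ^ 2 • b z) y)
      = 2 * u y * LinearMap.trace ℝ E (fderiv ℝ (fun z => u z • b z) y)
        - u y ^ 2 * LinearMap.trace ℝ E (fderiv ℝ b y) := by
  rw [trace_fderiv_smul (hu.fun_pow 2) hb, trace_fderiv_smul hu hb, fderiv_fun_pow 2 hu]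
  simp only [smul_apply, smul_eq_mul]
  ring

variable [MeasurableSpace E] [BorelSpace E] (μ : Measure E) [μ.IsAddHaarMeasure]

lemma integral_fderiv_eq_zero {F : Type*} [NormedAddCommGroup F] [NormedSpace ℝ F] {v : E → F}
    (hv : ContDiff ℝ 1 v) (hc : HasCompactSupport v) :
    ∫ y, fderiv ℝ v y ∂μ = 0 := by
  have hint := integrable_fderiv μ hv hc
  ext w
  rw [ContinuousLinearMap.integral_apply hint, zero_apply]
  simpa using integral_smul_fderiv_eq_neg_fderiv_smul_of_integrable (μ := μ)
    (f := fun _ => (1 : ℝ)) (g := v) (v := w) (by simp)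
    (by simpa using hint.apply_continuousLinearMap w)
    (by simpa using hv.continuous.integrable_of_hasCompactSupport hc)
    (fun _ _ => differentiableAt_const _) (fun y _ => hv.differentiable one_ne_zero y)

lemma integral_trace_fderiv_eq_zero {v : E → E} (hv : ContDiff ℝ 1 v)
    (hc : HasCompactSupport v) :
    ∫ y, LinearMap.trace ℝ E (fderiv ℝ v y) ∂μ = 0 := by
  let traceL : (E →L[ℝ] E) →L[ℝ] ℝ := LinearMap.toContinuousLinearMap
    ((LinearMap.trace ℝ E).comp (ContinuousLinearMap.coeLM ℝ))
  have hint := integrable_fderiv μ hv hc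
  have h := traceL.integral_comp_comm hint
  rw [integral_fderiv_eq_zero μ hv hc, map_zero] at h
  exact h

lemma integral_two_mul_trace_fderiv_smul_self {u : E → ℝ} {b : E → E} (hu : ContDiff ℝ 1 u)
    (huc : HasCompactSupport u) (hb : ContDiff ℝ 1 b) :
    ∫ y, 2 * u y * LinearMap.trace ℝ E (fderiv ℝ (fun z => u z • b z) y) ∂μ
      = ∫ y, u y ^ 2 * LinearMap.trace ℝ E (fderiv ℝ b y) ∂μ := by
  have hu2c : HasCompactSupport fun y => u y ^ 2 := huc.comp_left (zero_pow two_ne_zero)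
  have hsq : ContDiff ℝ 1 fun z => u z ^ 2 • b z := (hu.pow 2).smul hb
  have hsqc : HasCompactSupport fun z => u z ^ 2 • b z := hu2c.smul_right
  have hpt : ∀ y, 2 * u y * LinearMap.trace ℝ E (fderiv ℝ (fun z => u z • b z) y)
      = LinearMap.trace ℝ E (fderiv ℝ (fun z => u z ^ 2 • b z) y)
        + u y ^ 2 * LinearMap.trace ℝ E (fderiv ℝ b y) := fun y => by
    rw [trace_fderiv_sq_smul (hu.differentiable one_ne_zero y) (hb.differentiable one_ne_zero y)]
    ring
  simp_rw [hpt]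
  rw [integral_add, integral_trace_fderiv_eq_zero μ hsq hsqc, zero_add]
  · exact (continuous_trace_fderiv hsq).integrable_of_hasCompactSupport
      ((hsqc.fderiv (𝕜 := ℝ)).comp_left (g := fun T : E →L[ℝ] E => LinearMap.trace ℝ E T)
        (by simp))
  · exact ((hu.continuous.pow 2).mul (continuous_trace_fderiv hb)).integrable_of_hasCompactSupport
      hu2c.mul_right

end Divergence

lemma abs_integral_mul_le_of_abs_le {α : Type*} [MeasurableSpace α] {μ : Measure α}
    {w g : α → ℝ} {M : ℝ} (hw : Integrable w μ) (hw0 : ∀ y, 0 ≤ w y) (hg : ∀ y, |g y| ≤ M) :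
    |∫ y, w y * g y ∂μ| ≤ M * ∫ y, w y ∂μ := by
  rw [← integral_const_mul, ← Real.norm_eq_abs]
  refine norm_integral_le_of_norm_le (hw.const_mul M) (ae_of_all _ fun y => ?_)
  rw [Real.norm_eq_abs, abs_mul, abs_of_nonneg (hw0 y), mul_comm]
  exact mul_le_mul_of_nonneg_right (hg y) (hw0 y)

section Hamiltonian

variable {d : ℕ}

local notation "E" => EuclideanSpace ℝ (Fin d)

lemma zero_mem_Bset {M : ℝ} (hM : 0 ≤ M) : (0 : E → E) ∈ Bset d M :=
  ⟨contDiff_const, fun _ => by simpa using hM, fun _ => by simpa using hM⟩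

lemma abs_integral_mul_divbm_sub_le {M ξ : ℝ} {b : E → E} (hb : b ∈ Bset d M) {m₁ m₂ : E → ℝ}
    (hm₁ : ContDiff ℝ 1 m₁) (hm₂ : ContDiff ℝ 1 m₂)
    (hm₁c : HasCompactSupport m₁) (hm₂c : HasCompactSupport m₂) :
    |(∫ y, 2 * (m₁ y - m₂ y) / ξ ^ 2 * divbm d b m₁ y)
        - ∫ y, 2 * (m₁ y - m₂ y) / ξ ^ 2 * divbm d b m₂ y|
      ≤ M * (∫ y, (m₁ y - m₂ y) ^ 2) / ξ ^ 2 := by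
  obtain ⟨hb, -, hdivb⟩ := hb
  set u : E → ℝ := fun y => m₁ y - m₂ y
  have hu : ContDiff ℝ 1 u := hm₁.sub hm₂
  have huc : HasCompactSupport u := hm₁c.sub hm₂c
  have hint : ∀ m : E → ℝ, ContDiff ℝ 1 m →
      Integrable fun y => 2 * u y / ξ ^ 2 * divbm d b m y := fun m hm =>
    (((continuous_const.mul hu.continuous).div_const _).mul
      (continuous_trace_fderiv (hm.smul hb))).integrable_of_hasCompactSupport
      (huc.comp_left (g := fun x => 2 * x / ξ ^ 2) (by simp)).mul_right
  have hdiff : (∫ y, 2 * u y / ξ ^ 2 * divbm d b m₁ y) - ∫ y, 2 * u y / ξ ^ 2 * divbm d b m₂ y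
      = (ξ ^ 2)⁻¹ * ∫ y, u y ^ 2 * LinearMap.trace ℝ E (fderiv ℝ b y) := by
    rw [← integral_sub (hint m₁ hm₁) (hint m₂ hm₂),
      ← integral_two_mul_trace_fderiv_smul_self volume hu huc hb, ← integral_const_mul]
    congr 1 with y
    rw [← mul_sub, divbm, divbm, trace_fderiv_smul_sub (hm₁.differentiable one_ne_zero y)
      (hm₂.differentiable one_ne_zero y) (hb.differentiable one_ne_zero y)]
    ring
  rw [hdiff, abs_mul, abs_of_nonneg (by positivity), inv_mul_eq_div]
  gcongr
  exact abs_integral_mul_le_of_abs_le ((hu.continuous.pow 2).integrable_of_hasCompactSupport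
    (huc.comp_left (zero_pow two_ne_zero))) (fun y => sq_nonneg _) hdivb

end Hamiltonian

theorem stmt_15_general (d k : ℕ) (M L ξ : ℝ) (hM : 0 < M)
    (A : Set (EuclideanSpace ℝ (Fin k))) (hAne : A.Nonempty)
    (f : EuclideanSpace ℝ (Fin d) → EuclideanSpace ℝ (Fin k) → EuclideanSpace ℝ (Fin d))
    (hf : ∀ a ∈ A, ∀ x z, ‖f x a - f z a‖ ≤ L * ‖x - z‖)
    (ℓ : EuclideanSpace ℝ (Fin d) → (EuclideanSpace ℝ (Fin d) → ℝ) → ℝ →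
      EuclideanSpace ℝ (Fin k) →
      (EuclideanSpace ℝ (Fin d) → EuclideanSpace ℝ (Fin d)) → ℝ)
    (ωℓ : ℝ → ℝ)
    (hωℓ : ∀ (x₁ x₂ : EuclideanSpace ℝ (Fin d))
      (m₁ m₂ : EuclideanSpace ℝ (Fin d) → ℝ) (t₁ t₂ : ℝ) a b,
      |ℓ x₁ m₁ t₁ a b - ℓ x₂ m₂ t₂ a b| ≤
        ωℓ (‖x₁ - x₂‖ + H1dist d m₁ m₂ + |t₁ - t₂|))
    (m₁ m₂ : EuclideanSpace ℝ (Fin d) → ℝ)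
    (hm₁ : ContDiff ℝ 1 m₁) (hm₂ : ContDiff ℝ 1 m₂)
    (hm₁c : HasCompactSupport m₁) (hm₂c : HasCompactSupport m₂)
    (x₁ x₂ : EuclideanSpace ℝ (Fin d)) (t₁ t₂ : ℝ) (p : EuclideanSpace ℝ (Fin d)) :
    |Ham d k M A f ℓ x₁ m₁ t₁ p (fun y => 2 * (m₁ y - m₂ y) / ξ ^ 2) -
        Ham d k M A f ℓ x₂ m₂ t₂ p (fun y => 2 * (m₁ y - m₂ y) / ξ ^ 2)| ≤
      L * ‖x₁ - x₂‖ * ‖p‖ + M * (∫ y, (m₁ y - m₂ y) ^ 2) / ξ ^ 2 +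
        ωℓ (‖x₁ - x₂‖ + H1dist d m₁ m₂ + |t₁ - t₂|) := by
  have : Nonempty A := hAne.to_subtype
  have : Nonempty (Bset d M) := ⟨⟨0, zero_mem_Bset hM.le⟩⟩
  refine Real.abs_iInf_sub_iInf_le fun b => Real.abs_iSup_sub_iSup_le fun a => ?_
  have hdrift : |(inner ℝ (f x₁ a) p : ℝ) - inner ℝ (f x₂ a) p| ≤ L * ‖x₁ - x₂‖ * ‖p‖ := by
    rw [← inner_sub_left]
    exact (abs_real_inner_le_norm _ _).trans
      (mul_le_mul_of_nonneg_right (hf a a.2 x₁ x₂) (norm_nonneg p))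
  have htransport := abs_integral_mul_divbm_sub_le (ξ := ξ) b.2 hm₁ hm₂ hm₁c hm₂c
  have hcost := hωℓ x₁ x₂ m₁ m₂ t₁ t₂ a b
  rw [abs_le] at hdrift htransport hcost ⊢
  constructor <;> linarith

/-- the key comparison estimate for the Hamiltonian: for
`q = 2(m₁−m₂)/ξ²`,
`|H(x₁,m₁,t₁,p,q) − H(x₂,m₂,t₂,p,q)| ≤ L‖x₁−x₂‖‖p‖ + M‖m₁−m₂‖²_{L²}/ξ²
    + ωℓ(‖x₁−x₂‖ + ‖m₁−m₂‖_{H¹} + |t₁−t₂|)`. -/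
theorem stmt_15 (d k : ℕ) (M L ξ : ℝ) (hM : 0 < M) (hL : 0 < L) (hξ : ξ ≠ 0)
    (A : Set (EuclideanSpace ℝ (Fin k))) (hA : IsCompact A) (hAne : A.Nonempty)
    (f : EuclideanSpace ℝ (Fin d) → EuclideanSpace ℝ (Fin k) → EuclideanSpace ℝ (Fin d))
    (hf : ∀ a ∈ A, ∀ x z, ‖f x a - f z a‖ ≤ L * ‖x - z‖)
    (ℓ : EuclideanSpace ℝ (Fin d) → (EuclideanSpace ℝ (Fin d) → ℝ) → ℝ →
      EuclideanSpace ℝ (Fin k) →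
      (EuclideanSpace ℝ (Fin d) → EuclideanSpace ℝ (Fin d)) → ℝ)
    (ωℓ : ℝ → ℝ) (hωℓmono : Monotone ωℓ)
    (hωℓ : ∀ (x₁ x₂ : EuclideanSpace ℝ (Fin d))
      (m₁ m₂ : EuclideanSpace ℝ (Fin d) → ℝ) (t₁ t₂ : ℝ) a b,
      |ℓ x₁ m₁ t₁ a b - ℓ x₂ m₂ t₂ a b| ≤
        ωℓ (‖x₁ - x₂‖ + H1dist d m₁ m₂ + |t₁ - t₂|))
    (m₁ m₂ : EuclideanSpace ℝ (Fin d) → ℝ)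
    (hm₁ : ContDiff ℝ 1 m₁) (hm₂ : ContDiff ℝ 1 m₂)
    (hm₁c : HasCompactSupport m₁) (hm₂c : HasCompactSupport m₂)
    (x₁ x₂ : EuclideanSpace ℝ (Fin d)) (t₁ t₂ : ℝ) (p : EuclideanSpace ℝ (Fin d)) :
    |Ham d k M A f ℓ x₁ m₁ t₁ p (fun y => 2 * (m₁ y - m₂ y) / ξ ^ 2) -
        Ham d k M A f ℓ x₂ m₂ t₂ p (fun y => 2 * (m₁ y - m₂ y) / ξ ^ 2)| ≤
      L * ‖x₁ - x₂‖ * ‖p‖ + M * (∫ y, (m₁ y - m₂ y) ^ 2) / ξ ^ 2 +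
        ωℓ (‖x₁ - x₂‖ + H1dist d m₁ m₂ + |t₁ - t₂|) :=
  stmt_15_general d k M L ξ hM A hAne f hf ℓ ωℓ hωℓ m₁ m₂ hm₁ hm₂ hm₁c hm₂c x₁ x₂ t₁ t₂ p

end
end

section
/- In the one-dimensional second example, the function V(x,m,t) = (x − ∫_ℝ ξ m(ξ) dξ)² is a (classical, hence viscosity) solution of the Isaacs equation −V_t + max_{a∈[−c,c]}{−V_x a} + inf_{b∈B}⟨D_m V, (bm)_ξ⟩_{L²} = 0 with final condition V(x,m,T) = (x − ∫ ξm dξ)²; explicitly, setting z = 2(x − ∫ ξm dξ), one has max_{a∈[−c,c]}{−za} + inf_{b∈B} ∫_ℝ (−zξ)(bm)_ξ dξ = |z|c − |z|c = 0 whenever ∫ m = 1, m ≥ 0, and m has compact support. -/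
/-!
Since `V` does not depend on `t`, only the Hamiltonian has to vanish. Integrating by parts
against `ξ` turns `∫ (-zξ)(bm)_ξ` into `z ∫ b m`; as `m` is a probability density and
`|b| ≤ c`, this lies in `[-|z|c, |z|c]`, so the infimum over `b` is `-|z|c` and the supremum
over `a` is `|z|c`, both attained by the constant `-c · sign z`.
-/

open Set MeasureTheory

theorem integral_mul_deriv_eq_neg_integral_deriv_mul {u f : ℝ → ℝ} (hu : ContDiff ℝ 1 u)
    (hf : Differentiable ℝ f) (hfc : HasCompactSupport f) (hf' : Integrable (deriv f)) :
    ∫ ξ, u ξ * deriv f ξ = -∫ ξ, deriv u ξ * f ξ := by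
  have hu_diff : Differentiable ℝ u := hu.differentiable one_ne_zero
  have huf' : Integrable (fun ξ => u ξ * deriv f ξ) := by
    have hsupp : Function.support (fun ξ => u ξ * deriv f ξ) ⊆ tsupport f :=
      (Function.support_mul_subset_right _ _).trans support_deriv_subset
    exact (integrableOn_iff_integrable_of_support_subset hsupp).1 <|
      hf'.integrableOn.continuousOn_mul hu.continuous.continuousOn hfc
  exact integral_mul_deriv_eq_deriv_mul_of_integrable (fun ξ _ => (hu_diff ξ).hasDerivAt)
    (fun ξ _ => (hf ξ).hasDerivAt) huf'
    ((hu.continuous_deriv_one.mul hf.continuous).integrable_of_hasCompactSupport hfc.mul_left)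
    ((hu.continuous.mul hf.continuous).integrable_of_hasCompactSupport hfc.mul_left)

theorem integral_neg_mul_mul_deriv_eq {f : ℝ → ℝ} (z : ℝ) (hf : Differentiable ℝ f)
    (hfc : HasCompactSupport f) (hf' : Integrable (deriv f)) :
    ∫ ξ, -(z * ξ) * deriv f ξ = z * ∫ ξ, f ξ := by
  have hibp := integral_mul_deriv_eq_neg_integral_deriv_mul (u := fun ξ => ξ)
    contDiff_id hf hfc hf'
  simp only [deriv_id'', one_mul] at hibp
  calc ∫ ξ, -(z * ξ) * deriv f ξ = -z * ∫ ξ, ξ * deriv f ξ := by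
        rw [← integral_const_mul]; congr 1; funext ξ; ring
    _ = z * ∫ ξ, f ξ := by rw [hibp]; ring

theorem integrable_deriv_mul_of_bounded {b m : ℝ → ℝ} {c c₁ : ℝ} (hb : Differentiable ℝ b)
    (hbc : ∀ y, |b y| ≤ c) (hbc₁ : ∀ y, |deriv b y| ≤ c₁)
    (hmc : HasCompactSupport m) (hmd : ContDiff ℝ 1 m) :
    Integrable (deriv fun ξ => b ξ * m ξ) := by
  have hmdiff : Differentiable ℝ m := hmd.differentiable one_ne_zero
  have hderiv : (deriv fun ξ => b ξ * m ξ) = fun ξ => deriv b ξ * m ξ + b ξ * deriv m ξ :=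
    funext fun ξ => ((hb ξ).hasDerivAt.mul (hmdiff ξ).hasDerivAt).deriv
  rw [hderiv]
  refine Integrable.add ?_ ?_
  · exact (hmd.continuous.integrable_of_hasCompactSupport hmc).bdd_mul
      (aestronglyMeasurable_deriv b volume) (.of_forall hbc₁)
  · exact (hmd.continuous_deriv_one.integrable_of_hasCompactSupport hmc.deriv).bdd_mul
      hb.continuous.aestronglyMeasurable (.of_forall hbc)

theorem abs_integral_mul_density_le {b m : ℝ → ℝ} {c : ℝ} (hbc : ∀ y, |b y| ≤ c)
    (hm0 : ∀ ξ, 0 ≤ m ξ) (hmI : ∫ ξ, m ξ = 1) (hm : Integrable m) :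
    |∫ ξ, b ξ * m ξ| ≤ c := by
  have hbound : ∀ ξ, ‖b ξ * m ξ‖ ≤ c * m ξ := fun ξ => by
    rw [Real.norm_eq_abs, abs_mul, abs_of_nonneg (hm0 ξ)]
    exact mul_le_mul_of_nonneg_right (hbc ξ) (hm0 ξ)
  simpa only [integral_const_mul, hmI, mul_one, Real.norm_eq_abs] using
    norm_integral_le_of_norm_le (hm.const_mul c) (.of_forall hbound)

theorem exists_abs_le_mul_eq_neg_abs_mul (z : ℝ) {c : ℝ} (hc : 0 ≤ c) :
    ∃ k, |k| ≤ c ∧ z * k = -(|z| * c) := by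
  rcases le_total 0 z with hz | hz
  · exact ⟨-c, by rw [abs_neg, abs_of_nonneg hc], by rw [abs_of_nonneg hz]; ring⟩
  · exact ⟨c, by rw [abs_of_nonneg hc], by rw [abs_of_nonpos hz]; ring⟩

theorem ciSup_Icc_neg_mul_eq_abs_mul (z : ℝ) {c : ℝ} (hc : 0 ≤ c) :
    ⨆ a : Icc (-c) c, -(z * a.1) = |z| * c := by
  obtain ⟨k, hk, hzk⟩ := exists_abs_le_mul_eq_neg_abs_mul z hc
  have : Nonempty (Icc (-c) c) := ⟨⟨k, abs_le.1 hk⟩⟩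
  refine ciSup_eq_of_forall_le_of_forall_lt_exists_gt (fun a => ?_)
    fun w hw => ⟨⟨k, abs_le.1 hk⟩, by rwa [hzk, neg_neg]⟩
  calc -(z * a.1) ≤ |z| * |a.1| := (neg_le_abs _).trans (abs_mul _ _).le
    _ ≤ |z| * c := mul_le_mul_of_nonneg_left (abs_le.2 a.2) (abs_nonneg z)

theorem ciInf_mul_integral_mul_density_eq {S : Set (ℝ → ℝ)} {m : ℝ → ℝ} {c k : ℝ} (z : ℝ)
    (hS : ∀ b ∈ S, ∀ y, |b y| ≤ c) (hkS : (fun _ => k) ∈ S) (hzk : z * k = -(|z| * c))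
    (hm0 : ∀ ξ, 0 ≤ m ξ) (hmI : ∫ ξ, m ξ = 1) (hm : Integrable m) :
    ⨅ b : S, z * ∫ ξ, b.1 ξ * m ξ = -(|z| * c) := by
  have : Nonempty S := ⟨⟨_, hkS⟩⟩
  refine ciInf_eq_of_forall_ge_of_forall_gt_exists_lt (fun b => ?_)
    fun w hw => ⟨⟨_, hkS⟩, by rwa [integral_const_mul, hmI, mul_one, hzk]⟩
  have h := abs_integral_mul_density_le (hS b.1 b.2) hm0 hmI hm
  calc -(|z| * c) ≤ -(|z| * |∫ ξ, b.1 ξ * m ξ|) :=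
        neg_le_neg (mul_le_mul_of_nonneg_left h (abs_nonneg z))
    _ ≤ z * ∫ ξ, b.1 ξ * m ξ := by rw [← abs_mul]; exact neg_abs_le _

theorem stmt_16_general (c c₁ : ℝ) (hc : 0 < c) (hc₁ : 0 ≤ c₁)
    (m : ℝ → ℝ) (hm0 : ∀ ξ, 0 ≤ m ξ) (hmI : (∫ ξ, m ξ) = 1)
    (hmc : HasCompactSupport m) (hmd : ContDiff ℝ 1 m)
    (x : ℝ) :
    (∀ t : ℝ, HasDerivAt (fun _ : ℝ => (x - ∫ ξ, ξ * m ξ) ^ 2) 0 t) ∧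
    (⨆ a : ↥(Icc (-c) c), -(2 * (x - ∫ ξ, ξ * m ξ) * a.1)) +
      (⨅ b : ↥{b : ℝ → ℝ | Differentiable ℝ b ∧ (∀ y, |b y| ≤ c) ∧
          ∀ y, |deriv b y| ≤ c₁},
        ∫ ξ, -(2 * (x - ∫ η, η * m η) * ξ) * deriv (fun η => b.1 η * m η) ξ) = 0 := by
  refine ⟨fun t => hasDerivAt_const t _, ?_⟩
  set z := 2 * (x - ∫ ξ, ξ * m ξ)
  set B : Set (ℝ → ℝ) := {b | Differentiable ℝ b ∧ (∀ y, |b y| ≤ c) ∧ ∀ y, |deriv b y| ≤ c₁}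
  obtain ⟨k, hk, hzk⟩ := exists_abs_le_mul_eq_neg_abs_mul z hc.le
  have hkB : (fun _ => k) ∈ B :=
    ⟨differentiable_const k, fun _ => hk, fun _ => by simpa only [deriv_const', abs_zero]⟩
  have hibp (b : B) := integral_neg_mul_mul_deriv_eq (f := fun η => b.1 η * m η) z
    (b.2.1.mul (hmd.differentiable one_ne_zero)) hmc.mul_left
    (integrable_deriv_mul_of_bounded b.2.1 b.2.2.1 b.2.2.2 hmc hmd)
  rw [ciSup_Icc_neg_mul_eq_abs_mul z hc.le, congrArg iInf (funext hibp),
    ciInf_mul_integral_mul_density_eq z (fun b hb => hb.2.1) hkB hzk hm0 hmI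
      (hmd.continuous.integrable_of_hasCompactSupport hmc)]
  ring

/-- in the one-dimensional second example, the function
`V(x,m,t) = (x − ∫ ξ m(ξ) dξ)²` is a classical solution of the Isaacs equation:
`V` does not depend on `t` (so `V_t = 0`), and, setting `z = 2(x − ∫ ξ m dξ)`, one
has `max_{a∈[−c,c]} {−za} + inf_{b∈B} ∫ (−zξ)(bm)_ξ dξ = |z|c − |z|c = 0` whenever
`m ≥ 0`, `∫ m = 1` and `m` is a compactly supported `C¹` density.  Here
`B = {b : ‖b‖_∞ ≤ c, ‖b_x‖_∞ ≤ c₁}` (taken differentiable). -/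
theorem stmt_16 (c c₁ T : ℝ) (hc : 0 < c) (hc₁ : 0 ≤ c₁) (hT : 0 < T)
    (m : ℝ → ℝ) (hm0 : ∀ ξ, 0 ≤ m ξ) (hmI : (∫ ξ, m ξ) = 1)
    (hmc : HasCompactSupport m) (hmd : ContDiff ℝ 1 m)
    (x : ℝ) :
    (∀ t : ℝ, HasDerivAt (fun _ : ℝ => (x - ∫ ξ, ξ * m ξ) ^ 2) 0 t) ∧
    (⨆ a : ↥(Icc (-c) c), -(2 * (x - ∫ ξ, ξ * m ξ) * a.1)) +
      (⨅ b : ↥{b : ℝ → ℝ | Differentiable ℝ b ∧ (∀ y, |b y| ≤ c) ∧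
          ∀ y, |deriv b y| ≤ c₁},
        ∫ ξ, -(2 * (x - ∫ η, η * m η) * ξ) * deriv (fun η => b.1 η * m η) ξ) = 0 :=
  stmt_16_general c c₁ hc hc₁ m hm0 hmI hmc hmd x
end

section
/- In the one-dimensional first example with monotone initial data: if m is nonnegative, bounded, and non-increasing on [x − r − 2cT, x + r + 2cT], then the pair h_ℓ ≡ 0, h_r(t) = 2c(T−t) solves the backward system h_r'(t) = −2c·H(m(x−r−h_ℓ(t)) − m(x+r+h_r(t))), h_ℓ'(t) = −2c·H(m(x+r+h_r(t)) − m(x−r−h_ℓ(t))), h_r(T) = h_ℓ(T) = 0, h_ℓ'h_r' = 0, h_ℓ' + h_r' = −2c (with the convention that when the Heaviside argument vanishes one takes (h_ℓ',h_r') = (−2c,0) or (0,−2c)), and the corresponding candidate value V(x,m,t) = ∫_{x−r}^{x+r+2c(T−t)} m(ξ)dξ satisfies the stationarity identity −V_t + c|m(x+r+h_r(t)) − m(x−r−h_ℓ(t))| − c(m(x+r+h_r(t)) + m(x−r−h_ℓ(t))) = 0 for all t ∈ [0,T]. -/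
open Set MeasureTheory intervalIntegral

/-! Since `m` is non-increasing and the right front `x + r + 2c(T - t)` never passes to the left
of the left front `x - r`, the Heaviside argument `m(x - r) - m(x + r + h_r)` is nonnegative:
only the right front moves, at speed `2c`. Then `V_t = -2c·m(x + r + h_r)` by the fundamental
theorem of calculus, and the stationarity identity is `|b - a| = a - b` for `b ≤ a`. -/

lemma hasDerivAt_const_add_mul_sub (a k T t : ℝ) :
    HasDerivAt (fun t : ℝ => a + k * (T - t)) (-k) t := by
  simpa using (((hasDerivAt_id t).const_sub T).const_mul k).const_add a

lemma hasDerivAt_integral_of_hasDerivAt_upper {m g : ℝ → ℝ} {g' : ℝ} (a t : ℝ)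
    (hm : Continuous m) (hg : HasDerivAt g g' t) :
    HasDerivAt (fun t => ∫ ξ in a..g t, m ξ) (m (g t) * g') t :=
  (hm.integral_hasStrictDerivAt a (g t)).hasDerivAt.comp t hg

lemma heaviside_eq_of_le_of_ne {a b : ℝ} (k : ℝ) (hba : b ≤ a) (hne : a - b ≠ 0) :
    -k = -k * (if 0 < a - b then (1:ℝ) else 0) ∧
      (0:ℝ) = -k * (if 0 < b - a then (1:ℝ) else 0) := by
  have hpos : 0 < a - b := lt_of_le_of_ne (sub_nonneg.mpr hba) (Ne.symm hne)
  rw [if_pos hpos, if_neg (by linarith)]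
  constructor <;> ring

lemma stationarity_of_le {a b : ℝ} (c : ℝ) (hba : b ≤ a) :
    -(b * -(2 * c)) + c * |b - a| - c * (b + a) = 0 := by
  rw [abs_of_nonpos (sub_nonpos.mpr hba)]
  ring

lemma antitoneOn_right_front_le {m : ℝ → ℝ} {c r T x t : ℝ} (hc : 0 ≤ c) (hr : 0 ≤ r)
    (hmono : AntitoneOn m (Icc (x - r - 2*c*T) (x + r + 2*c*T))) (ht : t ∈ Icc (0:ℝ) T) :
    m (x + r + 2*c*(T - t)) ≤ m (x - r - 0) := by
  obtain ⟨ht0, htT⟩ := ht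
  refine hmono ⟨?_, ?_⟩ ⟨?_, ?_⟩ ?_ <;> nlinarith

theorem stmt_17_general (c r T x : ℝ) (hc : 0 < c) (hr : 0 < r)
    (m : ℝ → ℝ) (hmc : Continuous m)
    (hmono : AntitoneOn m (Icc (x - r - 2*c*T) (x + r + 2*c*T))) :
    -- final conditions
    (2*c*(T - T) = 0 ∧ (0:ℝ) = 0) ∧
    -- the backward ODE system with the Heaviside convention
    (∀ t ∈ Icc (0:ℝ) T,
      HasDerivAt (fun t : ℝ => 2*c*(T - t)) (-(2*c)) t ∧
      HasDerivAt (fun _ : ℝ => (0:ℝ)) 0 t ∧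
      (0:ℝ) * (-(2*c)) = 0 ∧ (0:ℝ) + (-(2*c)) = -(2*c) ∧
      (m (x - r - 0) - m (x + r + 2*c*(T - t)) ≠ 0 →
        (-(2*c) = -(2*c) * (if 0 < m (x - r - 0) - m (x + r + 2*c*(T - t))
            then (1:ℝ) else 0) ∧
         (0:ℝ) = -(2*c) * (if 0 < m (x + r + 2*c*(T - t)) - m (x - r - 0)
            then (1:ℝ) else 0)))) ∧
    -- stationarity identity for the candidate value function
    (∀ t ∈ Icc (0:ℝ) T, ∃ Vt : ℝ,
      HasDerivAt (fun t : ℝ => ∫ ξ in (x - r)..(x + r + 2*c*(T - t)), m ξ) Vt t ∧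
      -Vt + c * |m (x + r + 2*c*(T - t)) - m (x - r - 0)| -
        c * (m (x + r + 2*c*(T - t)) + m (x - r - 0)) = 0) := by
  refine ⟨⟨by ring, rfl⟩, fun t ht => ⟨?_, hasDerivAt_const _ _, by ring, by ring, ?_⟩,
    fun t ht => ⟨m (x + r + 2*c*(T - t)) * -(2*c), ?_, ?_⟩⟩
  · simpa using hasDerivAt_const_add_mul_sub 0 (2*c) T t
  · exact heaviside_eq_of_le_of_ne (2*c) (antitoneOn_right_front_le hc.le hr.le hmono ht)
  · exact hasDerivAt_integral_of_hasDerivAt_upper (x - r) t hmc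
      (hasDerivAt_const_add_mul_sub (x + r) (2*c) T t)
  · exact stationarity_of_le c (antitoneOn_right_front_le hc.le hr.le hmono ht)

/-- the one-dimensional first example with monotone initial data.
If `m` is nonnegative, continuous and non-increasing on `[x−r−2cT, x+r+2cT]`, then
the pair `hℓ ≡ 0`, `h_r(t) = 2c(T−t)` solves the backward system
(`h_r' = −2c·H(m(x−r−hℓ) − m(x+r+h_r))`, `hℓ' = −2c·H(m(x+r+h_r) − m(x−r−hℓ))`,
`h_r(T) = hℓ(T) = 0`, `hℓ'·h_r' = 0`, `hℓ' + h_r' = −2c`, with the stated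
convention when the Heaviside argument vanishes), and the candidate value
`V(x,m,t) = ∫_{x−r}^{x+r+2c(T−t)} m` satisfies the stationarity identity
`−V_t + c|m(x+r+h_r(t)) − m(x−r−hℓ(t))| − c(m(x+r+h_r(t)) + m(x−r−hℓ(t))) = 0`. -/
theorem stmt_17 (c r T x : ℝ) (hc : 0 < c) (hr : 0 < r) (hT : 0 < T)
    (m : ℝ → ℝ) (hmc : Continuous m) (hm0 : ∀ ξ, 0 ≤ m ξ)
    (hmono : AntitoneOn m (Icc (x - r - 2*c*T) (x + r + 2*c*T))) :
    -- final conditions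
    (2*c*(T - T) = 0 ∧ (0:ℝ) = 0) ∧
    -- the backward ODE system with the Heaviside convention
    (∀ t ∈ Icc (0:ℝ) T,
      HasDerivAt (fun t : ℝ => 2*c*(T - t)) (-(2*c)) t ∧
      HasDerivAt (fun _ : ℝ => (0:ℝ)) 0 t ∧
      (0:ℝ) * (-(2*c)) = 0 ∧ (0:ℝ) + (-(2*c)) = -(2*c) ∧
      (m (x - r - 0) - m (x + r + 2*c*(T - t)) ≠ 0 →
        (-(2*c) = -(2*c) * (if 0 < m (x - r - 0) - m (x + r + 2*c*(T - t))
            then (1:ℝ) else 0) ∧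
         (0:ℝ) = -(2*c) * (if 0 < m (x + r + 2*c*(T - t)) - m (x - r - 0)
            then (1:ℝ) else 0)))) ∧
    -- stationarity identity for the candidate value function
    (∀ t ∈ Icc (0:ℝ) T, ∃ Vt : ℝ,
      HasDerivAt (fun t : ℝ => ∫ ξ in (x - r)..(x + r + 2*c*(T - t)), m ξ) Vt t ∧
      -Vt + c * |m (x + r + 2*c*(T - t)) - m (x - r - 0)| -
        c * (m (x + r + 2*c*(T - t)) + m (x - r - 0)) = 0) :=
  stmt_17_general c r T x hc hr m hmc hmono
end

section
/- Gluing of non-anticipating strategies: let t ≤ τ ≤ T, let γ̃ ∈ Γ(t) be a non-anticipating strategy on [t,T], and for each possible state reached at time τ let γ_τ ∈ Γ(τ) be a non-anticipating strategy on [τ,T] depending on the restriction of β to [t,τ] only through the state it generates at time τ. Then the concatenated map γ̂[β](s) = γ̃[β](s) for s ∈ [t,τ] and γ̂[β](s) = γ_{(y(τ), m(τ))}[β|_{[τ,T]}](s) for s ∈ [τ,T] is well defined and non-anticipating, i.e. γ̂ ∈ Γ(t). -/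
/-!
Before the switching time `τ` the glued strategy is `γt`, which is non-anticipating on its own.
After `τ`, two controls that agree on `[t, τ']` with `τ < τ'` generate the same state at `τ`, so
the same strategy `γfam st` is used for both, and it only sees the controls on `[τ, τ'] ⊆ [t, τ']`.
-/

open Set MeasureTheory

theorem MeasureTheory.ae_imp_of_subset {α : Type*} [MeasurableSpace α] {μ : Measure α}
    {s s' : Set α} {P : α → Prop} (hss' : s ⊆ s') (h : ∀ᵐ x ∂μ, x ∈ s' → P x) :
    ∀ᵐ x ∂μ, x ∈ s → P x :=
  h.mono fun _ hx hxs => hx (hss' hxs)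

section NonAnticipating

variable {α F Am St : Type*} [LinearOrder α] [MeasurableSpace α] (μ : Measure α)

def IsNonAnticipating (a b : α) (γ : (α → F) → α → Am) : Prop :=
  ∀ τ' ∈ Icc a b, ∀ β₁ β₂ : α → F,
    (∀ᵐ s ∂μ, s ∈ Icc a τ' → β₁ s = β₂ s) →
    (∀ᵐ s ∂μ, s ∈ Icc a τ' → γ β₁ s = γ β₂ s)

variable {μ}

theorem isNonAnticipating_glue {t τ T : α} (ht : t ≤ τ) {γt : (α → F) → α → Am}
    (hγt : IsNonAnticipating μ t T γt) {σ : (α → F) → St}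
    (hσ : ∀ β₁ β₂ : α → F, (∀ᵐ s ∂μ, s ∈ Icc t τ → β₁ s = β₂ s) → σ β₁ = σ β₂)
    {γfam : St → (α → F) → α → Am} (hγfam : ∀ st, IsNonAnticipating μ τ T (γfam st)) :
    IsNonAnticipating μ t T fun β s => if s ≤ τ then γt β s else γfam (σ β) β s := by
  intro τ' hτ' β₁ β₂ hβ
  have tail : ∀ᵐ s ∂μ, s ∈ Icc t τ' → τ < s → γfam (σ β₁) β₁ s = γfam (σ β₂) β₂ s := by
    rcases le_or_gt τ' τ with hτ'τ | hττ'
    · exact ae_of_all _ fun s hs hτs => absurd (hs.2.trans hτ'τ) hτs.not_ge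
    have hσβ : σ β₁ = σ β₂ := hσ β₁ β₂ (ae_imp_of_subset (Icc_subset_Icc_right hττ'.le) hβ)
    have hβτ := ae_imp_of_subset (Icc_subset_Icc_left ht) hβ
    filter_upwards [hγfam (σ β₁) τ' ⟨hττ'.le, hτ'.2⟩ β₁ β₂ hβτ] with s hs hsτ' hτs
    rw [← hσβ]
    exact hs ⟨hτs.le, hsτ'.2⟩
  filter_upwards [hγt τ' hτ' β₁ β₂ hβ, tail] with s head tail hs
  split_ifs with hsτ
  exacts [head hs, tail hs (not_le.mp hsτ)]

end NonAnticipating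

theorem stmt_18_general {F Am St : Type*} [MeasurableSpace Am]
    (T t τ : ℝ) (ht : t ≤ τ)
    (γt : (ℝ → F) → (ℝ → Am))
    (hγt : ∀ τ' ∈ Icc t T, ∀ β₁ β₂ : ℝ → F,
      (∀ᵐ s ∂(volume : Measure ℝ), s ∈ Icc t τ' → β₁ s = β₂ s) →
      (∀ᵐ s ∂(volume : Measure ℝ), s ∈ Icc t τ' → γt β₁ s = γt β₂ s))
    (σ : (ℝ → F) → St)
    (hσ : ∀ β₁ β₂ : ℝ → F,
      (∀ᵐ s ∂(volume : Measure ℝ), s ∈ Icc t τ → β₁ s = β₂ s) → σ β₁ = σ β₂)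
    (γfam : St → (ℝ → F) → (ℝ → Am))
    (hγfam : ∀ st : St, ∀ τ' ∈ Icc τ T, ∀ β₁ β₂ : ℝ → F,
      (∀ᵐ s ∂(volume : Measure ℝ), s ∈ Icc τ τ' → β₁ s = β₂ s) →
      (∀ᵐ s ∂(volume : Measure ℝ), s ∈ Icc τ τ' → γfam st β₁ s = γfam st β₂ s)) :
    -- well-definedness: the concatenation maps measurable controls to measurable controls
    (∀ β : ℝ → F, Measurable (γt β) → (∀ st, Measurable (γfam st β)) →
      Measurable fun s => if s ≤ τ then γt β s else γfam (σ β) β s) ∧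
    -- non-anticipativity on `[t,T]`
    (∀ τ' ∈ Icc t T, ∀ β₁ β₂ : ℝ → F,
      (∀ᵐ s ∂(volume : Measure ℝ), s ∈ Icc t τ' → β₁ s = β₂ s) →
      (∀ᵐ s ∂(volume : Measure ℝ), s ∈ Icc t τ' →
        (if s ≤ τ then γt β₁ s else γfam (σ β₁) β₁ s) =
        (if s ≤ τ then γt β₂ s else γfam (σ β₂) β₂ s))) :=
  ⟨fun β hγtβ hγfamβ => Measurable.ite measurableSet_Iic hγtβ (hγfamβ (σ β)),
    isNonAnticipating_glue ht hγt hσ hγfam⟩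

/-- gluing of non-anticipating strategies.  Let `t ≤ τ ≤ T`, let
`γt` be a non-anticipating strategy on `[t,T]`, let `σ β` be the state (player
position and mass) generated at time `τ`, which depends only on the restriction of
`β` to `[t,τ]`, and for each state let `γfam st` be a non-anticipating strategy on
`[τ,T]`.  Then the concatenation
`γ̂[β](s) = γt[β](s)` for `s ≤ τ`, `γ̂[β](s) = γfam (σ β) [β](s)` for `s > τ`
is well defined (it maps measurable controls to measurable controls) and is
non-anticipating on `[t,T]`. -/
theorem stmt_18 {F Am St : Type*} [MeasurableSpace Am]
    (T t τ : ℝ) (ht : t ≤ τ) (hτ : τ ≤ T)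
    (γt : (ℝ → F) → (ℝ → Am))
    (hγt : ∀ τ' ∈ Icc t T, ∀ β₁ β₂ : ℝ → F,
      (∀ᵐ s ∂(volume : Measure ℝ), s ∈ Icc t τ' → β₁ s = β₂ s) →
      (∀ᵐ s ∂(volume : Measure ℝ), s ∈ Icc t τ' → γt β₁ s = γt β₂ s))
    (σ : (ℝ → F) → St)
    (hσ : ∀ β₁ β₂ : ℝ → F,
      (∀ᵐ s ∂(volume : Measure ℝ), s ∈ Icc t τ → β₁ s = β₂ s) → σ β₁ = σ β₂)
    (γfam : St → (ℝ → F) → (ℝ → Am))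
    (hγfam : ∀ st : St, ∀ τ' ∈ Icc τ T, ∀ β₁ β₂ : ℝ → F,
      (∀ᵐ s ∂(volume : Measure ℝ), s ∈ Icc τ τ' → β₁ s = β₂ s) →
      (∀ᵐ s ∂(volume : Measure ℝ), s ∈ Icc τ τ' → γfam st β₁ s = γfam st β₂ s)) :
    -- well-definedness: the concatenation maps measurable controls to measurable controls
    (∀ β : ℝ → F, Measurable (γt β) → (∀ st, Measurable (γfam st β)) →
      Measurable fun s => if s ≤ τ then γt β s else γfam (σ β) β s) ∧
    -- non-anticipativity on `[t,T]`
    (∀ τ' ∈ Icc t T, ∀ β₁ β₂ : ℝ → F,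
      (∀ᵐ s ∂(volume : Measure ℝ), s ∈ Icc t τ' → β₁ s = β₂ s) →
      (∀ᵐ s ∂(volume : Measure ℝ), s ∈ Icc t τ' →
        (if s ≤ τ then γt β₁ s else γfam (σ β₁) β₁ s) =
        (if s ≤ τ then γt β₂ s else γfam (σ β₂) β₂ s))) :=
  stmt_18_general T t τ ht γt hγt σ hσ γfam hγfam
end
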